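/- Let E be a finite set. If T is an m-partition of E (for some integer m > 0), then T is exactly the set of hyperplanes of a paving matroid of rank m+1 on E. Conversely, for every integer r \ge 2 and every rank-r paving matroid M on E, the set of hyperplanes of M is an (r-1)-partition of E. -/

import Mathlib

open MvPolynomial Finset
open scoped Matroid

namespace TuttePaper

open Classical

variable {α : Type*}

/-- The rank of a set in a matroid: the maximum cardinality of an independent subset. -/
noncomputable def rk (M : Matroid α) (A : Set α) : ℕ :=
  sSup {n | ∃ I, M.Indep I ∧ I ⊆ A ∧ I.ncard = n}

/-- The Tutte polynomial of a matroid with finite ground set, as an element of ℤ[x,y];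
the variable `X 0` plays the role of `x` and `X 1` that of `y`:
`T_M(x,y) = ∑_{A ⊆ E} (x-1)^(r(E)-r(A)) (y-1)^(|A|-r(A))`. -/
noncomputable def tutte (M : Matroid α) : MvPolynomial (Fin 2) ℤ :=
  if hE : M.E.Finite then
    ∑ A ∈ hE.toFinset.powerset,
      (X 0 - 1) ^ (rk M M.E - rk M ↑A) * (X 1 - 1) ^ (A.card - rk M ↑A)
  else 0

/-- The Tutte polynomial with `x` evaluated at `1`, i.e. `T_M(1,y)`, as an element of ℤ[x,y]. -/
noncomputable def tutteX1 (M : Matroid α) : MvPolynomial (Fin 2) ℤ :=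
  eval₂ C (fun i => if i = 0 then 1 else X 1) (tutte M)

/-- A loop of a matroid: an element whose singleton has rank zero. -/
def IsLoop (M : Matroid α) (e : α) : Prop := rk M {e} = 0

/-- A coloop of a matroid: an element contained in every basis. -/
def IsColoop (M : Matroid α) (e : α) : Prop := ∀ B, M.IsBase B → e ∈ B

/-- A circuit of a matroid: a minimal dependent set. -/
def IsCircuit (M : Matroid α) (C : Set α) : Prop :=
  C ⊆ M.E ∧ ¬ M.Indep C ∧ ∀ D ⊂ C, M.Indep D

/-- A hyperplane of a matroid: a flat of rank `r(M) - 1`. -/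
def IsHyperplane (M : Matroid α) (H : Set α) : Prop :=
  M.IsFlat H ∧ rk M H + 1 = rk M M.E

/-- Deletion of a set of elements from a matroid. -/
def deleteSet (M : Matroid α) (D : Set α) : Matroid α := M ↾ (M.E \ D)

/-- Contraction of a set of elements in a matroid, `M/C = (M✶ \ C)✶`. -/
def contractSet (M : Matroid α) (C : Set α) : Matroid α := ((M✶) ↾ (M.E \ C))✶

/-- Deletion of a single element. -/
def deleteElem (M : Matroid α) (e : α) : Matroid α := deleteSet M {e}

/-- Contraction of a single element. -/
def contractElem (M : Matroid α) (e : α) : Matroid α := contractSet M {e}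

/-- A matroid is paving if every circuit has size at least the rank of the matroid. -/
def Paving (M : Matroid α) : Prop := ∀ C, IsCircuit M C → rk M M.E ≤ C.ncard

/-- A matroid is sparse paving if it is paving and any two distinct circuits of size `r(M)`
have symmetric difference of size greater than two. -/
def SparsePaving (M : Matroid α) : Prop :=
  Paving M ∧ ∀ C₁ C₂, IsCircuit M C₁ → IsCircuit M C₂ →
    C₁.ncard = rk M M.E → C₂.ncard = rk M M.E → C₁ ≠ C₂ → 2 < (symmDiff C₁ C₂).ncard

/-- An `m`-partition of a set `E`: a collection of at least two subsets of `E`, each with at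
least `m` elements, such that every `m`-element subset of `E` is contained in exactly one
member of the collection. -/
def IsMPartition (m : ℕ) (E : Set α) (T : Set (Set α)) : Prop :=
  1 < T.ncard ∧ (∀ B ∈ T, B ⊆ E ∧ m ≤ B.ncard) ∧
    ∀ S ⊆ E, S.ncard = m → ∃! B, B ∈ T ∧ S ⊆ B

/-- `tcoef M i j` is the coefficient `t_{ij}` of `x^i y^j` in the Tutte polynomial of `M`. -/
noncomputable def tcoef (M : Matroid α) (i j : ℕ) : ℤ :=
  MvPolynomial.coeff (Finsupp.single (0 : Fin 2) i + Finsupp.single (1 : Fin 2) j) (tutte M)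

/-- The characteristic polynomial `χ_N(λ) = ∑_{A ⊆ E} (-1)^{|A|} λ^{r(E)-r(A)}` of a matroid,
evaluated at an element `l` of a commutative ring. -/
noncomputable def charEval {R : Type*} [CommRing R] (N : Matroid α) (l : R) : R :=
  if hE : N.E.Finite then
    ∑ A ∈ hE.toFinset.powerset, (-1 : R) ^ A.card * l ^ (rk N N.E - rk N ↑A)
  else 0

/-- Crapo's coboundary polynomial `χ̄_M(λ,t) = ∑_{X flat of M} t^{|X|} χ_{M/X}(λ)`,
evaluated at elements `l`, `t` of a commutative ring. -/
noncomputable def cobEval {R : Type*} [CommRing R] (M : Matroid α) (l t : R) : R :=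
  if hE : M.E.Finite then
    (hE.toFinset.powerset.filter (fun F : Finset α => M.IsFlat ↑F)).sum
      (fun F => t ^ F.card * charEval (contractSet M ↑F) l)
  else 0

/-!
In a paving matroid of rank `r` every set of size `r - 1` is independent, so it lies in exactly
one hyperplane, its closure; hence the hyperplanes form an `(r - 1)`-partition.

Conversely, given an `m`-partition `T`, call a subset of `E` independent if it has at most `m`
elements, or `m + 1` elements and lies in no block. Since every `m`-set lies in exactly one block,
these sets satisfy augmentation, and the closure of an `m`-subset of a block is the block itself.
So the blocks are exactly the hyperplanes, and the matroid is paving of rank `m + 1` because all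
sets of size at most `m` are independent.
-/

section Rank

variable {M : Matroid α} {I X : Set α}

theorem rk_eq_toNat_eRk (M : Matroid α) (X : Set α) : rk M X = (M.eRk X).toNat := by
  have hset : {n | ∃ I, M.Indep I ∧ I ⊆ X ∧ I.ncard = n} = {n : ℕ | (n : ℕ∞) ≤ M.eRk X} := by
    ext n
    constructor
    · rintro ⟨I, hI, hIX, rfl⟩
      by_cases hIfin : I.Finite
      · change (I.ncard : ℕ∞) ≤ M.eRk X
        exact hIfin.cast_ncard_eq ▸ hI.encard_le_eRk_of_subset hIX
      · simp [Set.Infinite.ncard hIfin]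
    · intro hn
      obtain ⟨I, hIX, hI, hIn⟩ := Matroid.le_eRk_iff.1 hn
      exact ⟨I, hI, hIX, by rw [Set.ncard_def, hIn, ENat.toNat_natCast]⟩
  rw [rk, hset]
  induction M.eRk X using ENat.recTopCoe with
  | top =>
    simp only [le_top, Set.ofPred_true, ENat.toNat_top]
    exact Nat.sSup_of_not_bddAbove not_bddAbove_univ
  | coe k => simp only [Nat.cast_le, ENat.toNat_natCast]; exact csSup_Iic

theorem rk_eq_ncard_of_isBasis (hI : M.IsBasis I X) : rk M X = I.ncard := by
  rw [rk_eq_toNat_eRk, ← hI.encard_eq_eRk, Set.ncard_def]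

theorem rk_eq_ncard_of_indep (hI : M.Indep I) : rk M I = I.ncard :=
  rk_eq_ncard_of_isBasis hI.isBasis_self

theorem rk_closure (M : Matroid α) (X : Set α) : rk M (M.closure X) = rk M X := by
  rw [rk_eq_toNat_eRk, rk_eq_toNat_eRk, Matroid.eRk_closure_eq]

theorem cast_rk [M.RankFinite] (X : Set α) : (rk M X : ℕ∞) = M.eRk X := by
  rw [rk_eq_toNat_eRk, ENat.natCast_toNat (M.isRkFinite_set X).eRk_lt_top.ne]

theorem rk_ground_eq_ncard_of_indep [M.RankFinite] (hI : M.Indep I)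
    (hmax : ∀ J, M.Indep J → J.ncard ≤ I.ncard) : rk M M.E = I.ncard := by
  obtain ⟨B, hB, hIB⟩ := hI.exists_isBase_superset
  rw [rk_eq_ncard_of_isBasis hB.isBasis_ground]
  exact le_antisymm (hmax B hB.indep) (Set.ncard_le_ncard hIB hB.finite)

end Rank

section Hyperplane

variable {M : Matroid α} {I H : Set α}

theorem isHyperplane_closure_of_indep (hI : M.Indep I) (hr : I.ncard + 1 = rk M M.E) :
    IsHyperplane M (M.closure I) :=
  ⟨M.isFlat_closure I, by rw [rk_closure, rk_eq_ncard_of_indep hI, hr]⟩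

theorem IsHyperplane.exists_isBasis (hH : IsHyperplane M H) :
    ∃ I, M.IsBasis I H ∧ I.ncard + 1 = rk M M.E := by
  obtain ⟨I, hI⟩ := M.exists_isBasis H hH.1.subset_ground
  exact ⟨I, hI, by rw [← rk_eq_ncard_of_isBasis hI, hH.2]⟩

theorem IsHyperplane.eq_closure_of_subset [M.RankFinite] (hH : IsHyperplane M H)
    (hI : M.Indep I) (hIH : I ⊆ H) (hr : I.ncard + 1 = rk M M.E) : H = M.closure I := by
  have hrk : M.eRk H ≤ M.eRk I := by
    rw [← cast_rk, ← cast_rk, rk_eq_ncard_of_indep hI]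
    have := hH.2
    exact_mod_cast (by omega : rk M H ≤ I.ncard)
  rw [(M.isRkFinite_set I).closure_eq_closure_of_subset_of_eRk_ge_eRk hIH hrk, hH.1.closure]

theorem existsUnique_isHyperplane_superset [M.RankFinite] (hI : M.Indep I)
    (hr : I.ncard + 1 = rk M M.E) : ∃! H, IsHyperplane M H ∧ I ⊆ H :=
  ⟨M.closure I, ⟨isHyperplane_closure_of_indep hI hr, M.subset_closure I⟩,
    fun _ ⟨hH, hIH⟩ => hH.eq_closure_of_subset hI hIH hr⟩

theorem one_lt_ncard_setOf_isHyperplane [M.Finite] (h : 2 ≤ rk M M.E) :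
    1 < {H | IsHyperplane M H}.ncard := by
  obtain ⟨B, hB⟩ := M.exists_isBase
  have hBr : B.ncard = rk M M.E := (rk_eq_ncard_of_isBasis hB.isBasis_ground).symm
  obtain ⟨e, he, f, hf, hef⟩ := (Set.one_lt_ncard hB.finite).1 (by omega)
  have hyp : ∀ x ∈ B, IsHyperplane M (M.closure (B \ {x})) := fun x hx =>
    isHyperplane_closure_of_indep (hB.indep.subset Set.sdiff_subset)
      (by rw [Set.ncard_sdiff_singleton_add_one hx hB.finite, hBr])
  have hfin : {H | IsHyperplane M H}.Finite :=
    M.ground_finite.finite_subsets.subset fun H hH => hH.1.subset_ground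
  refine (Set.one_lt_ncard hfin).2 ⟨_, hyp e he, _, hyp f hf, fun hcl => ?_⟩
  have hef' : e ∈ M.closure (B \ {f}) :=
    M.subset_closure _ (Set.sdiff_subset.trans hB.subset_ground) ⟨he, hef⟩
  exact hB.indep.notMem_closure_sdiff_of_mem he (hcl ▸ hef')

end Hyperplane

theorem isCircuit_iff (M : Matroid α) (C : Set α) : IsCircuit M C ↔ M.IsCircuit C := by
  rw [Matroid.isCircuit_iff_forall_ssubset, Matroid.Dep, IsCircuit]
  tauto

theorem Paving.indep_of_ncard_lt {M : Matroid α} {X : Set α} (hM : Paving M) (hXE : X ⊆ M.E)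
    (hX : X.Finite) (hr : X.ncard < rk M M.E) : M.Indep X := by
  by_contra hdep
  obtain ⟨C, hCX, hC⟩ := Matroid.Dep.exists_isCircuit_subset ⟨hdep, hXE⟩
  have := hM C ((isCircuit_iff M C).2 hC)
  have := Set.ncard_le_ncard hCX hX
  omega

section MPartition

variable {m : ℕ} {E : Set α} {T : Set (Set α)} {I J S B : Set α}

def MPartitionIndep (m : ℕ) (E : Set α) (T : Set (Set α)) (I : Set α) : Prop :=
  I ⊆ E ∧ I.ncard ≤ m + 1 ∧ ∀ B ∈ T, I ⊆ B → I.ncard ≤ m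

theorem mPartitionIndep_of_ncard_le (hIE : I ⊆ E) (hI : I.ncard ≤ m) :
    MPartitionIndep m E T I :=
  ⟨hIE, by omega, fun _ _ _ => hI⟩

theorem MPartitionIndep.subset (hE : E.Finite) (hJ : MPartitionIndep m E T J) (hIJ : I ⊆ J) :
    MPartitionIndep m E T I := by
  have hJfin := hE.subset hJ.1
  refine ⟨hIJ.trans hJ.1, (Set.ncard_le_ncard hIJ hJfin).trans hJ.2.1, fun B hB hIB => ?_⟩
  rcases hIJ.eq_or_ssubset with rfl | hss
  · exact hJ.2.2 B hB hIB
  · have := Set.ncard_lt_ncard hss hJfin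
    have := hJ.2.1
    omega

theorem IsMPartition.mPartitionIndep_insert (hT : IsMPartition m E T) (hE : E.Finite) {x : α}
    (hB : B ∈ T) (hSB : S ⊆ B) (hS : S.ncard = m) (hx : x ∈ E \ B) :
    MPartitionIndep m E T (insert x S) := by
  have hSE := hSB.trans (hT.2.1 B hB).1
  have hxS : x ∉ S := fun h => hx.2 (hSB h)
  have hcard : (insert x S).ncard = m + 1 := by
    rw [Set.ncard_insert_of_notMem hxS (hE.subset hSE), hS]
  refine ⟨Set.insert_subset hx.1 hSE, hcard.le, fun B' hB' hxSB' => ?_⟩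
  have hB'B : B' = B :=
    (hT.2.2 S hSE hS).unique ⟨hB', (Set.subset_insert x S).trans hxSB'⟩ ⟨hB, hSB⟩
  exact absurd (hB'B ▸ hxSB' (Set.mem_insert x S)) hx.2

theorem IsMPartition.mPartitionIndep_augment (hT : IsMPartition m E T) (hE : E.Finite)
    (hI : MPartitionIndep m E T I) (hJ : MPartitionIndep m E T J) (hIJ : I.ncard < J.ncard) :
    ∃ e ∈ J, e ∉ I ∧ MPartitionIndep m E T (insert e I) := by
  have hIfin := hE.subset hI.1
  by_cases hIm : I.ncard < m
  · obtain ⟨e, heJ, heI⟩ := Set.exists_mem_notMem_of_ncard_lt_ncard hIJ hIfin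
    refine ⟨e, heJ, heI, mPartitionIndep_of_ncard_le (Set.insert_subset (hJ.1 heJ) hI.1) ?_⟩
    rw [Set.ncard_insert_of_notMem heI hIfin]
    omega
  · have hJ2 := hJ.2.1
    obtain ⟨B, ⟨hB, hIB⟩, -⟩ := hT.2.2 I hI.1 (by omega)
    obtain ⟨e, heJ, heB⟩ := Set.not_subset.1 fun hJB => by
      have := hJ.2.2 B hB hJB
      omega
    exact ⟨e, heJ, fun heI => heB (hIB heI),
      hT.mPartitionIndep_insert hE hB hIB (by omega) ⟨hJ.1 heJ, heB⟩⟩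

def IsMPartition.matroid (hT : IsMPartition m E T) (hE : E.Finite) : Matroid α :=
  (IndepMatroid.ofFinite hE (MPartitionIndep m E T)
    (mPartitionIndep_of_ncard_le (Set.empty_subset E) (by simp))
    (fun _ _ hJ hIJ => hJ.subset hE hIJ)
    (fun _ _ hI hJ hIJ => hT.mPartitionIndep_augment hE hI hJ hIJ)
    (fun _ hI => hI.1)).matroid

variable (hT : IsMPartition m E T) (hE : E.Finite)

theorem IsMPartition.closure_eq_of_subset (hB : B ∈ T) (hSB : S ⊆ B) (hS : S.ncard = m) :
    (hT.matroid hE).closure S = B := by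
  have hBE := (hT.2.1 B hB).1
  have hSi : (hT.matroid hE).Indep S := mPartitionIndep_of_ncard_le (hSB.trans hBE) hS.le
  refine Set.Subset.antisymm (fun x hx => ?_) (fun x hxB => ?_)
  · by_contra hxB
    have hxS : x ∉ S := fun h => hxB (hSB h)
    have hxE : x ∈ E := Matroid.mem_ground_of_mem_closure hx
    exact ((hSi.insert_indep_iff_of_notMem hxS).1
      (hT.mPartitionIndep_insert hE hB hSB hS ⟨hxE, hxB⟩)).2 hx
  · by_contra hx
    have hxS : x ∉ S := fun h => hx ((hT.matroid hE).subset_closure S hSi.subset_ground h)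
    have hind := (hSi.insert_indep_iff_of_notMem hxS).2 ⟨hBE hxB, hx⟩
    have := hind.2.2 B hB (Set.insert_subset hxB hSB)
    rw [Set.ncard_insert_of_notMem hxS (hE.subset (hSB.trans hBE))] at this
    omega

instance IsMPartition.finite_matroid : (hT.matroid hE).Finite := ⟨hE⟩

theorem IsMPartition.rk_matroid : rk (hT.matroid hE) (hT.matroid hE).E = m + 1 := by
  have hTfin : T.Finite := Set.finite_of_ncard_pos (by have := hT.1; omega)
  obtain ⟨B₁, hB₁, B₂, hB₂, hne⟩ := (Set.one_lt_ncard hTfin).1 hT.1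
  obtain ⟨hB₁E, hB₁m⟩ := hT.2.1 B₁ hB₁
  obtain ⟨hB₂E, hB₂m⟩ := hT.2.1 B₂ hB₂
  obtain ⟨S₁, hS₁B, hS₁⟩ := Set.exists_subset_card_eq hB₁m
  obtain ⟨S₂, hS₂B, hS₂⟩ := Set.exists_subset_card_eq hB₂m
  obtain ⟨x, hxB₂, hxB₁⟩ := Set.not_subset.1 fun hB₂B₁ => hne <|
    (hT.2.2 S₂ (hS₂B.trans hB₂E) hS₂).unique ⟨hB₁, hS₂B.trans hB₂B₁⟩ ⟨hB₂, hS₂B⟩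
  have hJ := hT.mPartitionIndep_insert hE hB₁ hS₁B hS₁ ⟨hB₂E hxB₂, hxB₁⟩
  have hJcard : (insert x S₁).ncard = m + 1 := by
    rw [Set.ncard_insert_of_notMem (fun h => hxB₁ (hS₁B h)) (hE.subset (hS₁B.trans hB₁E)), hS₁]
  rw [← hJcard]
  exact rk_ground_eq_ncard_of_indep (M := hT.matroid hE) hJ fun I hI => hJcard ▸ hI.2.1

theorem IsMPartition.paving_matroid : Paving (hT.matroid hE) := by
  intro C hC
  rw [hT.rk_matroid hE]
  by_contra hlt
  exact hC.2.1 (mPartitionIndep_of_ncard_le hC.1 (by omega))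

theorem IsMPartition.setOf_isHyperplane_matroid :
    {H | IsHyperplane (hT.matroid hE) H} = T := by
  have hrk := hT.rk_matroid hE
  ext H
  constructor
  · intro hH
    obtain ⟨S, hS, hSr⟩ := IsHyperplane.exists_isBasis hH
    obtain ⟨B, ⟨hB, hSB⟩, -⟩ := hT.2.2 S hS.indep.subset_ground (by omega)
    rwa [← hH.1.closure, ← hS.closure_eq_closure, hT.closure_eq_of_subset hE hB hSB
      (by omega)]
  · intro hH
    obtain ⟨S, hSH, hS⟩ := Set.exists_subset_card_eq (hT.2.1 H hH).2
    rw [← hT.closure_eq_of_subset hE hH hSH hS]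
    exact isHyperplane_closure_of_indep
      (mPartitionIndep_of_ncard_le (hSH.trans (hT.2.1 H hH).1) hS.le) (hS ▸ hrk.symm)

end MPartition

/-- an `m`-partition of a finite set `E` is exactly the set of hyperplanes of
a paving matroid of rank `m + 1` on `E`; conversely, the set of hyperplanes of a rank-`r`
paving matroid (`r ≥ 2`) on `E` is an `(r-1)`-partition of `E`. -/
theorem mPartition_paving (E : Set α) (hE : E.Finite) :
    (∀ m : ℕ, 0 < m → ∀ T : Set (Set α), IsMPartition m E T →
      ∃ M : Matroid α, M.E = E ∧ rk M M.E = m + 1 ∧ Paving M ∧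
        {H : Set α | IsHyperplane M H} = T) ∧
    (∀ (r : ℕ) (M : Matroid α), 2 ≤ r → M.E = E → rk M M.E = r → Paving M →
      IsMPartition (r - 1) E {H : Set α | IsHyperplane M H}) := by
  refine ⟨fun m _ T hT => ⟨hT.matroid hE, rfl, hT.rk_matroid hE, hT.paving_matroid hE,
    hT.setOf_isHyperplane_matroid hE⟩, ?_⟩
  rintro r M hr rfl rfl hM
  have : M.Finite := ⟨hE⟩
  refine ⟨one_lt_ncard_setOf_isHyperplane hr, fun H hH => ⟨hH.1.subset_ground, ?_⟩,
    fun S hSE hS => existsUnique_isHyperplane_superset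
      (hM.indep_of_ncard_lt hSE (hE.subset hSE) (by omega)) (by omega)⟩
  obtain ⟨I, hI, hIr⟩ := hH.exists_isBasis
  have := Set.ncard_le_ncard hI.subset (hE.subset hH.1.subset_ground)
  omega

end TuttePaper
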